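/- Let E ⊆ 𝔽_p^n be an m-dimensional linear subspace and let e_0 ≺ e_1 ≺ ... ≺ e_{p^m−1} be the elements of E listed in lexicographic order (where a ≺ b iff ∑ p^{m−i} a_i < ∑ p^{m−i} b_i under the lift of coordinates to {0,...,p−1}). Then {e_{p^0}, e_{p^1}, ..., e_{p^{m−1}}} is a basis of E, and for every 0 ≤ i ≤ p^m − 1 with base-p expansion i = ∑_{j=0}^{m−1} i_j p^{m−1−j}, one has e_i = ∑_{j=0}^{m−1} i_j e_{p^{m−1−j}}. -/

import Mathlib

set_option linter.unusedSectionVars false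
set_option linter.unusedVariables false
set_option maxHeartbeats 1000000

/-- The complex primitive `m`-th root of unity `e^{2πi/m}`. -/
noncomputable def zeta (m : ℕ) : ℂ := Complex.exp (2 * Real.pi * Complex.I / m)

/-- Inner product on `(ZMod p)^n`. -/
def dot {p n : ℕ} (a x : Fin n → ZMod p) : ZMod p := ∑ i, a i * x i

/-- Walsh transform of a generalized p-ary function `f : (ZMod p)^n → ZMod (p^k)`. -/
noncomputable def walsh (p n k : ℕ) [Fact (Nat.Prime p)]
    (f : (Fin n → ZMod p) → ZMod (p ^ k)) (a : Fin n → ZMod p) : ℂ :=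
  ∑ x : Fin n → ZMod p, zeta (p ^ k) ^ (f x).val * zeta p ^ ((-(dot a x)).val)

/-- The lexicographic value of a vector in `(ZMod p)^n`: `∑ p^(n-1-i) * a_i` with canonical lifts. -/
def lexVal {p n : ℕ} (a : Fin n → ZMod p) : ℕ := ∑ i : Fin n, p ^ (n - 1 - (i : ℕ)) * (a i).val

section Aux
variable {p : ℕ} [Fact (Nat.Prime p)]

instance : NeZero p := ⟨(Fact.out (p := Nat.Prime p)).ne_zero⟩

lemma lexVal_succ {n : ℕ} (v : Fin (n + 1) → ZMod p) :
    lexVal v = p ^ n * (v 0).val + lexVal (fun i : Fin n => v i.succ) := by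
  unfold lexVal
  rw [Fin.sum_univ_succ]
  congr 1
  apply Finset.sum_congr rfl
  intro i _
  congr 2
  simp only [Fin.val_succ]
  omega

lemma lexVal_lt {n : ℕ} (v : Fin n → ZMod p) : lexVal v < p ^ n := by
  induction n with
  | zero => simp [lexVal]
  | succ n IH =>
    rw [lexVal_succ]
    have h1 : (v 0).val < p := ZMod.val_lt _
    have h2 := IH (fun i => v i.succ)
    have h3 : p ^ n * (v 0).val + p ^ n ≤ p ^ n * p := by
      have : p ^ n * ((v 0).val + 1) ≤ p ^ n * p := Nat.mul_le_mul_left _ h1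
      rw [Nat.mul_succ] at this
      exact this
    have : p ^ n * p = p ^ (n + 1) := by ring
    omega

lemma lexVal_inj {n : ℕ} {v w : Fin n → ZMod p} (h : lexVal v = lexVal w) : v = w := by
  induction n with
  | zero => funext i; exact i.elim0
  | succ n IH =>
    rw [lexVal_succ, lexVal_succ] at h
    have hv := lexVal_lt (p := p) (fun i : Fin n => v i.succ)
    have hw := lexVal_lt (p := p) (fun i : Fin n => w i.succ)
    have hd : (v 0).val = (w 0).val := by
      have h1 : (p ^ n * (v 0).val + lexVal (fun i : Fin n => v i.succ)) / p ^ n = (v 0).val := by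
        rw [Nat.mul_add_div (pow_pos (Fact.out (p := Nat.Prime p)).pos n),
          Nat.div_eq_of_lt hv, Nat.add_zero]
      have h2 : (p ^ n * (w 0).val + lexVal (fun i : Fin n => w i.succ)) / p ^ n = (w 0).val := by
        rw [Nat.mul_add_div (pow_pos (Fact.out (p := Nat.Prime p)).pos n),
          Nat.div_eq_of_lt hw, Nat.add_zero]
      rw [← h1, ← h2, h]
    have h0 : v 0 = w 0 := ZMod.val_injective p hd
    have htail : (fun i : Fin n => v i.succ) = fun i : Fin n => w i.succ := by
      apply IH
      rw [hd] at h
      omega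
    funext i
    refine Fin.cases h0 (fun j => congrFun htail j) i

/-- Arithmetic helper. -/
private lemma head_lt_aux {B c c' r r' : ℕ} (h : c < c') (hr : r < B) :
    B * c + r < B * c' + r' := by
  have h1 : B * c + r < B * (c + 1) := by rw [Nat.mul_succ]; omega
  have h2 : B * (c + 1) ≤ B * c' := Nat.mul_le_mul_left _ h
  omega

private lemma head_le_aux {B c c' r r' : ℕ} (h : B * c + r < B * c' + r') (hr' : r' < B) :
    c ≤ c' := by
  by_contra hc
  push_neg at hc
  have h2 : B * (c' + 1) ≤ B * c := Nat.mul_le_mul_left _ hc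
  rw [Nat.mul_succ] at h2
  omega

/-- Translation by `t` preserves lexicographic order provided `t` vanishes at the
first coordinate where `x` and `x'` differ. -/
lemma lexVal_add_lt {n : ℕ} (t : Fin n → ZMod p) : ∀ (x x' : Fin n → ZMod p),
    (∀ i : Fin n, (∀ i', i' < i → x i' = x' i') → x i ≠ x' i → t i = 0) →
    lexVal x < lexVal x' → lexVal (t + x) < lexVal (t + x') := by
  induction n with
  | zero => intro x x' _ h; simp [lexVal] at h
  | succ n IH =>
    intro x x' ht h
    rw [lexVal_succ (t + x), lexVal_succ (t + x')]
    rw [lexVal_succ x, lexVal_succ x'] at h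
    by_cases h0 : x 0 = x' 0
    · have hh : (t + x) 0 = (t + x') 0 := by simp [h0]
      rw [hh]
      have htail : lexVal (fun i : Fin n => x i.succ) < lexVal (fun i : Fin n => x' i.succ) := by
        rw [h0] at h; omega
      have step := IH (fun i => t i.succ) (fun i => x i.succ) (fun i => x' i.succ) ?_ htail
      · have e1 : (fun i : Fin n => (t + x) i.succ)
            = (fun i => t i.succ) + (fun i : Fin n => x i.succ) := rfl
        have e2 : (fun i : Fin n => (t + x') i.succ)
            = (fun i => t i.succ) + (fun i : Fin n => x' i.succ) := rfl
        rw [e1, e2]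
        omega
      · intro i hlt hne
        refine ht i.succ ?_ hne
        intro i' hi'
        exact Fin.cases (motive := fun i' => i' < i.succ → x i' = x' i') (fun _ => h0)
          (fun j hj => hlt j (Fin.succ_lt_succ_iff.mp hj)) i' hi'
    · have ht0 : t 0 = 0 := ht 0 (fun i' hi' => absurd hi' (Fin.not_lt_zero i')) h0
      have hhx : (t + x) 0 = x 0 := by simp [ht0]
      have hhx' : (t + x') 0 = x' 0 := by simp [ht0]
      rw [hhx, hhx']
      have hval : (x 0).val < (x' 0).val := by
        have hle : (x 0).val ≤ (x' 0).val :=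
          head_le_aux h (lexVal_lt _)
        have : (x 0).val ≠ (x' 0).val := fun hc => h0 (ZMod.val_injective p hc)
        omega
      exact head_lt_aux hval (lexVal_lt _)


/-- `i` is a pivot position of `W` if some element of `W` has its first nonzero entry at `i`. -/
def IsPivot (W : Submodule (ZMod p) (Fin n → ZMod p)) (i : Fin n) : Prop :=
  ∃ v ∈ W, (∀ i', i' < i → v i' = 0) ∧ v i ≠ 0

/-- If `x ≠ x'` both lie in `W`, the first coordinate where they differ is a pivot of `W`. -/
lemma isPivot_of_diff {W : Submodule (ZMod p) (Fin n → ZMod p)} {x x' : Fin n → ZMod p}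
    (hx : x ∈ W) (hx' : x' ∈ W) {i : Fin n}
    (hlt : ∀ i', i' < i → x i' = x' i') (hne : x i ≠ x' i) : IsPivot W i := by
  refine ⟨x - x', W.sub_mem hx hx', ?_, ?_⟩
  · intro i' hi'
    simp [sub_eq_zero, hlt i' hi']
  · simpa [sub_eq_zero] using hne

/-- One can interpolate any values on the pivot positions by an element of `W`. -/
lemma exists_pivot_matching (W : Submodule (ZMod p) (Fin n → ZMod p))
    (g : Fin n → ZMod p) : ∃ u ∈ W, ∀ i : Fin n, IsPivot W i → u i = g i := by
  classical
  haveI : Fintype {i : Fin n // IsPivot W i} := Fintype.ofFinite _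
  let ρ : W →ₗ[ZMod p] ({i : Fin n // IsPivot W i} → ZMod p) :=
    { toFun := fun u j => (u : Fin n → ZMod p) j.1
      map_add' := fun _ _ => rfl
      map_smul' := fun _ _ => rfl }
  have hρinj : Function.Injective ρ := by
    rw [← LinearMap.ker_eq_bot, LinearMap.ker_eq_bot']
    intro u hu
    ext i
    by_contra hne
    have hSne : (Finset.univ.filter fun i : Fin n => (u : Fin n → ZMod p) i ≠ 0).Nonempty :=
      ⟨i, by simpa using hne⟩
    obtain ⟨-, hmin2⟩ := Finset.mem_filter.mp (Finset.min'_mem _ hSne)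
    have hpiv : IsPivot W ((Finset.univ.filter fun i : Fin n =>
        (u : Fin n → ZMod p) i ≠ 0).min' hSne) := by
      refine ⟨u, u.2, ?_, hmin2⟩
      intro i' hi'
      by_contra h0
      have hmem : i' ∈ Finset.univ.filter fun i : Fin n => (u : Fin n → ZMod p) i ≠ 0 := by
        rw [Finset.mem_filter]; exact ⟨Finset.mem_univ _, h0⟩
      exact absurd (Finset.min'_le _ i' hmem) (not_le.mpr hi')
    have := congrFun hu ⟨_, hpiv⟩
    exact hmin2 this
  -- choose a vector for each pivot
  have hch : ∀ j : {i : Fin n // IsPivot W i},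
      ∃ v, v ∈ W ∧ (∀ i', i' < j.1 → v i' = 0) ∧ v j.1 ≠ 0 := fun j => by
    obtain ⟨v, hv, h1, h2⟩ := j.2; exact ⟨v, hv, h1, h2⟩
  choose v hvW hv0 hvne using hch
  have hli : LinearIndependent (ZMod p) v := by
    rw [Fintype.linearIndependent_iff]
    intro c hc
    by_contra hx
    push_neg at hx
    obtain ⟨j, hj⟩ := hx
    have hSne : (Finset.univ.filter fun j => c j ≠ 0).Nonempty := ⟨j, by simpa using hj⟩
    obtain ⟨j0, hj0S, hj0min⟩ :=
      (Finset.univ.filter fun j => c j ≠ 0).exists_min_image (fun j => (j.1 : ℕ)) hSne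
    rw [Finset.mem_filter] at hj0S
    have hev := congrFun hc j0.1
    rw [Finset.sum_apply] at hev
    have hsingle : ∑ j', (c j' • v j') j0.1 = c j0 * v j0 j0.1 := by
      rw [Finset.sum_eq_single j0]
      · simp [Pi.smul_apply, smul_eq_mul]
      · intro j' _ hj'
        by_cases hcj' : c j' = 0
        · simp [hcj']
        · have hj'S : j' ∈ Finset.univ.filter fun j => c j ≠ 0 := by
            rw [Finset.mem_filter]; exact ⟨Finset.mem_univ _, hcj'⟩
          have hle := hj0min j' hj'S
          have hne2 : j0.1 ≠ j'.1 := fun hcc => hj' (Subtype.ext hcc.symm)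
          have hlt : j0.1 < j'.1 := lt_of_le_of_ne (by exact_mod_cast hle) hne2
          simp [hv0 j' j0.1 hlt]
      · intro h; exact absurd (Finset.mem_univ j0) h
    rw [hsingle] at hev
    exact (mul_ne_zero hj0S.2 (hvne j0)) (by simpa using hev)
  have hli' : LinearIndependent (ZMod p) (fun j => (⟨v j, hvW j⟩ : W)) := by
    apply LinearIndependent.of_comp W.subtype
    exact hli
  have hcard1 : Fintype.card {i : Fin n // IsPivot W i} ≤ Module.finrank (ZMod p) W :=
    hli'.fintype_card_le_finrank
  have hcard2 : Module.finrank (ZMod p) W ≤ Fintype.card {i : Fin n // IsPivot W i} := by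
    have := LinearMap.finrank_le_finrank_of_injective hρinj
    rwa [Module.finrank_fintype_fun_eq_card] at this
  have hρsurj : Function.Surjective ρ := by
    rw [← LinearMap.injective_iff_surjective_of_finrank_eq_finrank]
    · exact hρinj
    · rw [Module.finrank_fintype_fun_eq_card]; omega
  obtain ⟨u, hu⟩ := hρsurj (fun j => g j.1)
  exact ⟨u, u.2, fun i hi => congrFun hu ⟨i, hi⟩⟩


lemma sum_smul_cons {m n : ℕ} (a : Fin m → ZMod p) (b : Fin m → (Fin n → ZMod p)) :
    (∑ j, a j • (Fin.cons (0 : ZMod p) (b j) : Fin (n + 1) → ZMod p))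
      = (Fin.cons 0 (∑ j, a j • b j) : Fin (n + 1) → ZMod p) := by
  funext i
  induction i using Fin.cases with
  | zero => simp [Finset.sum_apply]
  | succ i => simp [Finset.sum_apply]

lemma main_basis : ∀ (n m : ℕ) (E : Submodule (ZMod p) (Fin n → ZMod p)),
    Module.finrank (ZMod p) E = m →
    ∃ b : Fin m → (Fin n → ZMod p),
      (∀ j, b j ∈ E) ∧
      (∀ v ∈ E, ∃ a : Fin m → ZMod p, ∑ j, a j • b j = v) ∧
      (∀ a a' : Fin m → ZMod p, lexVal a < lexVal a' →
        lexVal (∑ j, a j • b j) < lexVal (∑ j, a' j • b j)) := by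
  intro n
  induction n with
  | zero =>
    intro m E hE
    have hm0 : m = 0 := by
      have h1 := Submodule.finrank_le E
      rw [hE, Module.finrank_fintype_fun_eq_card, Fintype.card_fin] at h1
      omega
    subst hm0
    refine ⟨Fin.elim0, fun j => j.elim0, ?_, ?_⟩
    · intro v hv
      exact ⟨Fin.elim0, Subsingleton.elim _ _⟩
    · intro a a' h
      simp [lexVal] at h
  | succ n IH =>
    intro m E hE
    set T : (Fin (n + 1) → ZMod p) →ₗ[ZMod p] (Fin n → ZMod p) :=
      LinearMap.funLeft (ZMod p) (ZMod p) Fin.succ with hT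
    have hTapp : ∀ (v : Fin (n + 1) → ZMod p) (i : Fin n), T v i = v i.succ := fun v i => rfl
    by_cases hzero : ∀ v ∈ E, v 0 = 0
    · -- Case 1 : all elements vanish at the first coordinate
      have hfinj : Function.Injective (T.comp E.subtype) := by
        rw [← LinearMap.ker_eq_bot, LinearMap.ker_eq_bot']
        intro u hu
        apply Subtype.ext
        funext i
        induction i using Fin.cases with
        | zero => simpa using hzero u.1 u.2
        | succ i => simpa [hTapp] using congrFun hu i
      have hrange : LinearMap.range (T.comp E.subtype) = E.map T := by
        rw [LinearMap.range_comp, Submodule.range_subtype]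
      have hE' : Module.finrank (ZMod p) (E.map T) = m := by
        rw [← hrange, LinearMap.finrank_range_of_inj hfinj, hE]
      obtain ⟨b', hb'mem, hb'surj, hb'mono⟩ := IH m (E.map T) hE'
      refine ⟨fun j => Fin.cons 0 (b' j), ?_, ?_, ?_⟩
      · intro j
        show (Fin.cons (0 : ZMod p) (b' j) : Fin (n + 1) → ZMod p) ∈ E
        obtain ⟨v, hvE, hvT⟩ := hb'mem j
        have hveq : Fin.cons (0 : ZMod p) (b' j) = v := by
          funext i
          induction i using Fin.cases with
          | zero => simp [hzero v hvE]
          | succ i => simpa [hTapp] using (congrFun hvT i).symm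
        rw [hveq]; exact hvE
      · intro v hv
        obtain ⟨a, ha⟩ := hb'surj (T v) (Submodule.mem_map_of_mem hv)
        refine ⟨a, ?_⟩
        show (∑ j, a j • (Fin.cons (0 : ZMod p) (b' j) : Fin (n + 1) → ZMod p)) = v
        rw [sum_smul_cons, ha]
        funext i
        induction i using Fin.cases with
        | zero => simp [hzero v hv]
        | succ i => simp [hTapp]
      · intro a a' h
        show lexVal (∑ j, a j • (Fin.cons (0 : ZMod p) (b' j) : Fin (n + 1) → ZMod p))
          < lexVal (∑ j, a' j • (Fin.cons (0 : ZMod p) (b' j) : Fin (n + 1) → ZMod p))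
        rw [sum_smul_cons, sum_smul_cons, lexVal_succ, lexVal_succ]
        simp only [Fin.cons_zero, ZMod.val_zero, Nat.mul_zero, Nat.zero_add, Fin.cons_succ]
        exact hb'mono a a' h
    · -- Case 2 : some element has nonzero first coordinate
      push_neg at hzero
      obtain ⟨w₀, hw₀E, hw₀⟩ := hzero
      have hw₁E : (w₀ 0)⁻¹ • w₀ ∈ E := E.smul_mem _ hw₀E
      set w₁ := (w₀ 0)⁻¹ • w₀ with hw₁def
      have hw₁0 : w₁ 0 = 1 := by
        show (w₀ 0)⁻¹ * w₀ 0 = 1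
        exact inv_mul_cancel₀ hw₀
      set φ : E →ₗ[ZMod p] ZMod p := (LinearMap.proj 0).comp E.subtype with hφ
      have hφsurj : Function.Surjective φ := by
        intro c
        refine ⟨c • ⟨w₁, hw₁E⟩, ?_⟩
        show c * w₁ 0 = c
        rw [hw₁0, mul_one]
      have hrank : 1 + Module.finrank (ZMod p) (LinearMap.ker φ) = m := by
        have h1 := LinearMap.finrank_range_add_finrank_ker φ
        rw [LinearMap.range_eq_top.mpr hφsurj, finrank_top, Module.finrank_self, hE] at h1
        exact h1
      obtain ⟨m', rfl⟩ : ∃ m', m = m' + 1 := ⟨m - 1, by omega⟩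
      set K : Submodule (ZMod p) (Fin (n + 1) → ZMod p) := (LinearMap.ker φ).map E.subtype
        with hK
      have hKmem : ∀ v, v ∈ K ↔ v ∈ E ∧ v 0 = 0 := by
        intro v
        constructor
        · rintro ⟨u, hu, rfl⟩
          exact ⟨u.2, LinearMap.mem_ker.mp hu⟩
        · rintro ⟨hvE, hv0⟩
          exact ⟨⟨v, hvE⟩, LinearMap.mem_ker.mpr hv0, rfl⟩
      have hKE : ∀ v ∈ K, v ∈ E := fun v hv => ((hKmem v).mp hv).1
      have hKrank : Module.finrank (ZMod p) K = m' := by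
        have h2 := (Submodule.equivMapOfInjective E.subtype E.injective_subtype
          (LinearMap.ker φ)).finrank_eq
        rw [hK, ← h2]
        omega
      have hker2 : Function.Injective (T.comp K.subtype) := by
        rw [← LinearMap.ker_eq_bot, LinearMap.ker_eq_bot']
        intro u hu
        apply Subtype.ext
        funext i
        induction i using Fin.cases with
        | zero => simpa using ((hKmem u.1).mp u.2).2
        | succ i => simpa [hTapp] using congrFun hu i
      have hrange2 : LinearMap.range (T.comp K.subtype) = K.map T := by
        rw [LinearMap.range_comp, Submodule.range_subtype]
      have hK'rank : Module.finrank (ZMod p) (K.map T) = m' := by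
        rw [← hrange2, LinearMap.finrank_range_of_inj hker2, hKrank]
      obtain ⟨b', hb'mem, hb'surj, hb'mono⟩ := IH m' (K.map T) hK'rank
      obtain ⟨u, huK', humatch⟩ := exists_pivot_matching (K.map T) (T w₁)
      obtain ⟨z, hzK, hzT⟩ := huK'
      set w := w₁ - z with hwdef
      have hwE : w ∈ E := E.sub_mem hw₁E (hKE z hzK)
      have hw0 : w 0 = 1 := by
        have hz0 := ((hKmem z).mp hzK).2
        show w₁ 0 - z 0 = 1
        rw [hz0, hw₁0, sub_zero]
      have hwpiv : ∀ i, IsPivot (K.map T) i → T w i = 0 := by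
        intro i hi
        have h2 : T w i = T w₁ i - T z i := by rw [hwdef, map_sub]; rfl
        rw [h2, hzT, humatch i hi, sub_self]
      set b : Fin (m' + 1) → (Fin (n + 1) → ZMod p) :=
        Fin.cons w (fun j => Fin.cons (0 : ZMod p) (b' j)) with hb
      have hPhi : ∀ a : Fin (m' + 1) → ZMod p,
          (∑ j, a j • b j) = a 0 • w + Fin.cons 0 (∑ j : Fin m', a j.succ • b' j) := by
        intro a
        rw [Fin.sum_univ_succ]
        simp only [hb, Fin.cons_zero, Fin.cons_succ]
        rw [sum_smul_cons]
      have hPhihead : ∀ a : Fin (m' + 1) → ZMod p, (∑ j, a j • b j) 0 = a 0 := by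
        intro a
        rw [hPhi]
        simp [hw0]
      have hPhitail : ∀ a : Fin (m' + 1) → ZMod p,
          (fun i : Fin n => (∑ j, a j • b j) i.succ)
            = a 0 • T w + ∑ j : Fin m', a j.succ • b' j := by
        intro a
        funext i
        rw [hPhi]
        simp [hTapp, Fin.cons_succ]
      refine ⟨b, ?_, ?_, ?_⟩
      · intro j
        induction j using Fin.cases with
        | zero => simpa [hb] using hwE
        | succ j =>
          obtain ⟨v, hvK, hvT⟩ := hb'mem j
          have hv := (hKmem v).mp hvK
          have hveq : b j.succ = v := by
            funext i
            induction i using Fin.cases with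
            | zero => simp [hb, hv.2]
            | succ i => simpa [hb, hTapp] using (congrFun hvT i).symm
          rw [hveq]; exact hv.1
      · intro v hv
        have hsub : v - (v 0) • w ∈ K := by
          rw [hKmem]
          refine ⟨E.sub_mem hv (E.smul_mem _ hwE), ?_⟩
          show v 0 - v 0 * w 0 = 0
          rw [hw0, mul_one, sub_self]
        obtain ⟨c, hc⟩ := hb'surj (T (v - (v 0) • w)) (Submodule.mem_map_of_mem hsub)
        refine ⟨Fin.cons (v 0) c, ?_⟩
        rw [hPhi]
        simp only [Fin.cons_zero, Fin.cons_succ]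
        rw [hc]
        funext i
        induction i using Fin.cases with
        | zero => simp [hw0]
        | succ i =>
          simp only [Pi.add_apply, Pi.smul_apply, Fin.cons_succ, smul_eq_mul, hTapp,
            Pi.sub_apply]
          ring
      · intro a a' h
        rw [lexVal_succ a, lexVal_succ a'] at h
        rw [lexVal_succ (∑ j, a j • b j), lexVal_succ (∑ j, a' j • b j)]
        rw [hPhihead, hPhihead, hPhitail, hPhitail]
        rcases lt_trichotomy (a 0).val ((a' 0).val) with hlt | heq | hgt
        · exact head_lt_aux hlt (lexVal_lt _)
        · have h00 : a 0 = a' 0 := ZMod.val_injective p heq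
          have htl : lexVal (fun i : Fin m' => a i.succ) < lexVal (fun i : Fin m' => a' i.succ) := by
            rw [heq] at h; omega
          have hS := hb'mono (fun i => a i.succ) (fun i => a' i.succ) htl
          have hxK : (∑ j : Fin m', a j.succ • b' j) ∈ K.map T :=
            Submodule.sum_mem _ (fun j _ => Submodule.smul_mem _ _ (hb'mem j))
          have hx'K : (∑ j : Fin m', a' j.succ • b' j) ∈ K.map T :=
            Submodule.sum_mem _ (fun j _ => Submodule.smul_mem _ _ (hb'mem j))
          have key := lexVal_add_lt (a 0 • T w)
            (∑ j : Fin m', a j.succ • b' j) (∑ j : Fin m', a' j.succ • b' j) ?_ hS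
          · rw [h00] at key
            rw [heq, h00]
            exact Nat.add_lt_add_left key _
          · intro i hlt hne
            have hpiv := isPivot_of_diff hxK hx'K hlt hne
            show a 0 * T w i = 0
            rw [hwpiv i hpiv, mul_zero]
        · exfalso
          have hle := head_le_aux h (lexVal_lt _)
          omega


lemma sum_digits_mod {p : ℕ} (hp : 1 < p) : ∀ (m i : ℕ),
    ∑ k : Fin m, p ^ (k : ℕ) * (i / p ^ (k : ℕ) % p) = i % p ^ m := by
  intro m
  induction m with
  | zero => intro i; simp [Nat.mod_one]
  | succ m IH =>
    intro i
    rw [Fin.sum_univ_castSucc]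
    simp only [Fin.coe_castSucc, Fin.val_last]
    rw [IH i]
    have hppos : 0 < p := by omega
    have hpm : 0 < p ^ m := pow_pos hppos m
    have e1 : p * (i / p ^ m / p) + i / p ^ m % p = i / p ^ m := Nat.div_add_mod _ p
    have e2 : i = p ^ m * (i / p ^ m) + i % p ^ m := (Nat.div_add_mod i (p ^ m)).symm
    have h1 : i = p ^ (m + 1) * (i / p ^ m / p) + (p ^ m * (i / p ^ m % p) + i % p ^ m) := by
      calc i = p ^ m * (i / p ^ m) + i % p ^ m := e2
        _ = p ^ m * (p * (i / p ^ m / p) + i / p ^ m % p) + i % p ^ m := by rw [e1]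
        _ = p ^ (m + 1) * (i / p ^ m / p) + (p ^ m * (i / p ^ m % p) + i % p ^ m) := by ring
    have h2 : p ^ m * (i / p ^ m % p) + i % p ^ m < p ^ (m + 1) := by
      have hr : i % p ^ m < p ^ m := Nat.mod_lt _ hpm
      have h3 : p ^ m * ((i / p ^ m % p) + 1) ≤ p ^ m * p :=
        Nat.mul_le_mul_left _ (Nat.succ_le_of_lt (Nat.mod_lt _ hppos))
      rw [Nat.mul_succ] at h3
      have hpow : p ^ (m + 1) = p ^ m * p := by ring
      omega
    conv_rhs => rw [h1]
    rw [Nat.mul_add_mod, Nat.mod_eq_of_lt h2]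
    omega

lemma lexVal_digits {m : ℕ} (i : ℕ) (hi : i < p ^ m) :
    lexVal (fun j : Fin m => ((i / p ^ (m - 1 - (j : ℕ)) % p : ℕ) : ZMod p)) = i := by
  have hp : 1 < p := (Fact.out (p := Nat.Prime p)).one_lt
  unfold lexVal
  have step1 : (∑ j : Fin m, p ^ (m - 1 - (j : ℕ)) *
      (ZMod.val (((i / p ^ (m - 1 - (j : ℕ)) % p : ℕ) : ZMod p))))
      = ∑ j : Fin m, (fun k : Fin m => p ^ (k : ℕ) * (i / p ^ (k : ℕ) % p)) (Fin.rev j) := by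
    apply Finset.sum_congr rfl
    intro j _
    have hrv : ((Fin.rev j : Fin m) : ℕ) = m - 1 - (j : ℕ) := by
      rw [Fin.val_rev]; omega
    simp only [hrv]
    rw [ZMod.val_natCast, Nat.mod_mod_of_dvd _ dvd_rfl]
  have step2 : (∑ j : Fin m, (fun k : Fin m => p ^ (k : ℕ) * (i / p ^ (k : ℕ) % p)) (Fin.rev j))
      = ∑ k : Fin m, p ^ (k : ℕ) * (i / p ^ (k : ℕ) % p) :=
    Fintype.sum_bijective Fin.rev Fin.rev_bijective _ _ (fun j => rfl)
  rw [step1, step2, sum_digits_mod hp m i, Nat.mod_eq_of_lt hi]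

lemma digit_pow {p : ℕ} (hp : 1 < p) {m : ℕ} (j j₀ : Fin m) :
    p ^ (m - 1 - (j₀ : ℕ)) / p ^ (m - 1 - (j : ℕ)) % p = if j = j₀ then 1 else 0 := by
  rcases lt_trichotomy ((j : ℕ)) ((j₀ : ℕ)) with hlt | heq | hgt
  · have hne : j ≠ j₀ := fun hc => by rw [hc] at hlt; omega
    rw [if_neg hne]
    have hab : m - 1 - (j₀ : ℕ) < m - 1 - (j : ℕ) := by
      have := j₀.isLt; omega
    rw [Nat.div_eq_of_lt (Nat.pow_lt_pow_right hp hab), Nat.zero_mod]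
  · have he : j = j₀ := Fin.ext heq
    rw [if_pos he, he, Nat.div_self (pow_pos (by omega) _), Nat.mod_eq_of_lt hp]
  · have hne : j ≠ j₀ := fun hc => by rw [hc] at hgt; omega
    rw [if_neg hne]
    have hab : m - 1 - (j : ℕ) < m - 1 - (j₀ : ℕ) := by
      have := j.isLt; omega
    rw [Nat.pow_div (by omega) (by omega)]
    have hk : m - 1 - (j₀ : ℕ) - (m - 1 - (j : ℕ)) = (m - 1 - (j₀ : ℕ) - (m - 1 - (j : ℕ)) - 1) + 1 := by
      omega
    rw [hk, pow_succ, Nat.mul_mod_left]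

end Aux

theorem stmt5 (p n m : ℕ) [Fact (Nat.Prime p)] (hm : 1 ≤ m)
    (E : Submodule (ZMod p) (Fin n → ZMod p))
    (hE : Module.finrank (ZMod p) E = m)
    (e : Fin (p ^ m) → (Fin n → ZMod p))
    (heE : ∀ i, e i ∈ E) (hinj : Function.Injective e)
    (hsurj : ∀ v ∈ E, ∃ i, e i = v)
    (hmono : ∀ i j : Fin (p ^ m), i < j → lexVal (e i) < lexVal (e j)) :
    LinearIndependent (ZMod p) (fun j : Fin m =>
      e ⟨p ^ (j : ℕ), Nat.pow_lt_pow_right (Fact.out (p := Nat.Prime p)).one_lt j.isLt⟩) ∧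
    Submodule.span (ZMod p) (Set.range (fun j : Fin m =>
      e ⟨p ^ (j : ℕ), Nat.pow_lt_pow_right (Fact.out (p := Nat.Prime p)).one_lt j.isLt⟩)) = E ∧
    ∀ i : Fin (p ^ m), e i = ∑ j : Fin m,
      ((((i : ℕ) / p ^ (m - 1 - (j : ℕ)) % p : ℕ) : ZMod p)) •
        e ⟨p ^ (m - 1 - (j : ℕ)),
          Nat.pow_lt_pow_right (Fact.out (p := Nat.Prime p)).one_lt (by omega)⟩ := by
  have hp1 : 1 < p := (Fact.out (p := Nat.Prime p)).one_lt
  obtain ⟨b, hbmem, hbsurj, hbmono⟩ := main_basis n m E hE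
  have hdval : ∀ i : Fin (p ^ m),
      lexVal (fun j : Fin m => (((i : ℕ) / p ^ (m - 1 - (j : ℕ)) % p : ℕ) : ZMod p)) = (i : ℕ) :=
    fun i => lexVal_digits (i : ℕ) i.isLt
  have hfmono : ∀ i i' : Fin (p ^ m), i < i' →
      lexVal (∑ j : Fin m, (((i : ℕ) / p ^ (m - 1 - (j : ℕ)) % p : ℕ) : ZMod p) • b j)
        < lexVal (∑ j : Fin m, (((i' : ℕ) / p ^ (m - 1 - (j : ℕ)) % p : ℕ) : ZMod p) • b j) := by
    intro i i' hii
    apply hbmono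
    rw [hdval, hdval]
    exact hii
  have hfE : ∀ i : Fin (p ^ m),
      (∑ j : Fin m, (((i : ℕ) / p ^ (m - 1 - (j : ℕ)) % p : ℕ) : ZMod p) • b j) ∈ E :=
    fun i => Submodule.sum_mem _ (fun j _ => Submodule.smul_mem _ _ (hbmem j))
  have hfinj : Function.Injective
      (fun i : Fin (p ^ m) =>
        ∑ j : Fin m, (((i : ℕ) / p ^ (m - 1 - (j : ℕ)) % p : ℕ) : ZMod p) • b j) := by
    intro i i' hEq
    beta_reduce at hEq
    by_contra hne
    rcases Ne.lt_or_gt hne with h | h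
    · have h2 := hfmono _ _ h; rw [hEq] at h2; exact lt_irrefl _ h2
    · have h2 := hfmono _ _ h; rw [hEq] at h2; exact lt_irrefl _ h2
  haveI : Fintype E := Fintype.ofFinite _
  have hcardE : Fintype.card E = p ^ m := by
    rw [Module.card_eq_pow_finrank (K := ZMod p) (V := E), ZMod.card, hE]
  have hfsurj : ∀ v ∈ E, ∃ i : Fin (p ^ m),
      (∑ j : Fin m, (((i : ℕ) / p ^ (m - 1 - (j : ℕ)) % p : ℕ) : ZMod p) • b j) = v := by
    intro v hv
    have hbij : Function.Bijective (fun i : Fin (p ^ m) =>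
        (⟨∑ j : Fin m, (((i : ℕ) / p ^ (m - 1 - (j : ℕ)) % p : ℕ) : ZMod p) • b j, hfE i⟩ : E)) := by
      rw [Fintype.bijective_iff_injective_and_card]
      constructor
      · intro i i' hEq
        exact hfinj (congrArg Subtype.val hEq)
      · rw [hcardE, Fintype.card_fin]
    obtain ⟨i, hi⟩ := hbij.2 ⟨v, hv⟩
    exact ⟨i, congrArg Subtype.val hi⟩
  have hef : e = fun i : Fin (p ^ m) =>
      ∑ j : Fin m, (((i : ℕ) / p ^ (m - 1 - (j : ℕ)) % p : ℕ) : ZMod p) • b j := by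
    have hse : StrictMono (fun i : Fin (p ^ m) => lexVal (e i)) := fun i i' h => hmono i i' h
    have hsf : StrictMono (fun i : Fin (p ^ m) =>
        lexVal (∑ j : Fin m, (((i : ℕ) / p ^ (m - 1 - (j : ℕ)) % p : ℕ) : ZMod p) • b j)) :=
      fun i i' h => hfmono i i' h
    have hr : Set.range (fun i : Fin (p ^ m) => lexVal (e i))
        = Set.range (fun i : Fin (p ^ m) =>
          lexVal (∑ j : Fin m, (((i : ℕ) / p ^ (m - 1 - (j : ℕ)) % p : ℕ) : ZMod p) • b j)) := by
      ext x
      simp only [Set.mem_range]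
      constructor
      · rintro ⟨i, rfl⟩
        obtain ⟨i', hi'⟩ := hfsurj (e i) (heE i)
        exact ⟨i', by rw [hi']⟩
      · rintro ⟨i, rfl⟩
        obtain ⟨i', hi'⟩ := hsurj _ (hfE i)
        exact ⟨i', by rw [hi']⟩
    haveI : WellFoundedLT (Fin (p ^ m)) := inferInstance
    have hfeq := (StrictMono.range_inj (β := Fin (p ^ m)) (γ := ℕ) hse hsf).mp hr
    funext i
    exact lexVal_inj (congrFun hfeq i)
  have hpow : ∀ (j : Fin m) (hlt : p ^ (m - 1 - (j : ℕ)) < p ^ m),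
      e ⟨p ^ (m - 1 - (j : ℕ)), hlt⟩ = b j := by
    intro j hlt
    rw [hef]
    have hterm : ∀ j' : Fin m,
        (((p ^ (m - 1 - (j : ℕ)) / p ^ (m - 1 - (j' : ℕ)) % p : ℕ) : ZMod p))
          = if j' = j then (1 : ZMod p) else 0 := by
      intro j'
      rw [digit_pow hp1 j' j]
      split <;> simp
    show (∑ j' : Fin m,
        (((p ^ (m - 1 - (j : ℕ)) / p ^ (m - 1 - (j' : ℕ)) % p : ℕ) : ZMod p)) • b j') = b j
    rw [Finset.sum_congr rfl (fun j' _ => by rw [hterm j'])]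
    simp [ite_smul]
  have hbLI : LinearIndependent (ZMod p) b := by
    rw [Fintype.linearIndependent_iff]
    intro c hc j
    have h0 : (∑ j, c j • b j)
        = (∑ j, (0 : Fin m → ZMod p) j • b j) := by
      rw [hc]; simp
    by_contra hne
    have hcne : c ≠ (0 : Fin m → ZMod p) := fun hcc => hne (by rw [hcc]; rfl)
    have hlv : lexVal c ≠ lexVal (0 : Fin m → ZMod p) := fun hc2 => hcne (lexVal_inj hc2)
    rcases Ne.lt_or_gt hlv with h | h
    · have h2 := hbmono _ _ h; rw [h0] at h2; exact lt_irrefl _ h2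
    · have h2 := hbmono _ _ h; rw [← h0] at h2; exact lt_irrefl _ h2
  have hfam : (fun j : Fin m =>
      e ⟨p ^ (j : ℕ), Nat.pow_lt_pow_right (Fact.out (p := Nat.Prime p)).one_lt j.isLt⟩)
      = b ∘ Fin.rev := by
    funext j
    have hidx : (⟨p ^ (j : ℕ), Nat.pow_lt_pow_right (Fact.out (p := Nat.Prime p)).one_lt j.isLt⟩
        : Fin (p ^ m))
        = ⟨p ^ (m - 1 - ((Fin.rev j : Fin m) : ℕ)),
            Nat.pow_lt_pow_right hp1 (by have := j.isLt; rw [Fin.val_rev]; omega)⟩ := by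
      apply Fin.ext
      simp only
      congr 1
      rw [Fin.val_rev]
      have := j.isLt
      omega
    rw [hidx]
    exact hpow (Fin.rev j) _
  refine ⟨?_, ?_, ?_⟩
  · rw [hfam]
    exact hbLI.comp Fin.rev Fin.rev_injective
  · rw [hfam]
    have hrg : Set.range (b ∘ Fin.rev) = Set.range b :=
      Function.Surjective.range_comp Fin.rev_surjective b
    rw [hrg]
    apply le_antisymm
    · rw [Submodule.span_le]
      rintro v ⟨j, rfl⟩
      exact hbmem j
    · intro v hv
      obtain ⟨a, ha⟩ := hbsurj v hv
      rw [← ha]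
      exact Submodule.sum_mem _
        (fun j _ => Submodule.smul_mem _ _ (Submodule.subset_span ⟨j, rfl⟩))
  · intro i
    rw [show e i = ∑ j : Fin m, (((i : ℕ) / p ^ (m - 1 - (j : ℕ)) % p : ℕ) : ZMod p) • b j
      from congrFun hef i]
    apply Finset.sum_congr rfl
    intro j _
    congr 1
    exact (hpow j _).symm
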